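/- arXiv:2112.05599 — 4 statements merged into one kernel-verified Lean document; each statement's English description precedes it below -/
import Mathlib

section
/- Let a, b, C be natural numbers and let Γ' be a subgroup of (ℤ/a)^b of index at most C. Then Γ' contains a subgroup isomorphic to (ℤ/a')^b for some natural number a' satisfying C!·a' ≥ a. -/
/-- Let `a, b, C` be natural numbers and `Γ'` a subgroup of `(ℤ/a)^b` of index at most `C`.
Then `Γ'` contains a subgroup isomorphic to `(ℤ/a')^b` for some `a'` with `C! * a' ≥ a`. -/
theorem stmt3 (a b C : ℕ) (Γ' : AddSubgroup (Fin b → ZMod a))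
    (hindex : Γ'.index ≤ C) :
    ∃ (a' : ℕ) (Γ'' : AddSubgroup (Fin b → ZMod a)),
      a ≤ Nat.factorial C * a' ∧ Γ'' ≤ Γ' ∧
      Nonempty (Γ'' ≃+ (Fin b → ZMod a')) := by
  rcases Nat.eq_zero_or_pos a with rfl | ha
  · refine ⟨1, ⊥, by simp, bot_le, ⟨?_⟩⟩
    exact AddEquiv.mk (equivOfSubsingletonOfSubsingleton (fun _ => 0) (fun _ => 0))
      (by intro x y; apply Subsingleton.elim)
  · haveI : NeZero a := ⟨ha.ne'⟩
    set n := Γ'.index with hn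
    have hn0 : n ≠ 0 := Γ'.index_ne_zero_of_finite
    set d := Nat.gcd a n with hd
    have hda : d ∣ a := Nat.gcd_dvd_left a n
    have hd0 : 0 < d := Nat.gcd_pos_of_pos_left n ha
    set a' := a / d with ha'
    have hada : a' * d = a := Nat.div_mul_cancel hda
    -- the bound
    have hbound : a ≤ Nat.factorial C * a' := by
      have hdn : d ≤ n := Nat.le_of_dvd (Nat.pos_of_ne_zero hn0) (Nat.gcd_dvd_right a n)
      calc a = a' * d := hada.symm
        _ ≤ a' * C := Nat.mul_le_mul_left _ (hdn.trans hindex)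
        _ ≤ a' * Nat.factorial C := Nat.mul_le_mul_left _ (Nat.self_le_factorial C)
        _ = Nat.factorial C * a' := Nat.mul_comm _ _
    -- the homomorphism `ZMod a' → ZMod a`, `x ↦ d * x`
    have hker : (AddMonoidHom.mk' (fun k : ℤ => (d : ZMod a) * (k : ZMod a))
        (by intro x y; push_cast; ring)) (a' : ℤ) = 0 := by
      simp only [AddMonoidHom.mk'_apply]
      push_cast
      rw [← Nat.cast_mul, Nat.mul_comm, hada, ZMod.natCast_self]
    set f : ZMod a' →+ ZMod a := ZMod.lift a' ⟨_, hker⟩ with hf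
    have hfval : ∀ k : ℤ, f (k : ZMod a') = (d : ZMod a) * (k : ZMod a) := fun k =>
      ZMod.lift_coe a' _ k
    have hfinj : Function.Injective f := by
      rw [injective_iff_map_eq_zero]
      intro x hx
      obtain ⟨k, rfl⟩ := ZMod.intCast_surjective x
      rw [hfval] at hx
      have : ((d * k : ℤ) : ZMod a) = 0 := by push_cast; exact hx
      rw [ZMod.intCast_zmod_eq_zero_iff_dvd] at this
      have ha'k : (a' : ℤ) ∣ k := by
        have h1 : (d : ℤ) * (a' : ℤ) ∣ (d : ℤ) * k := by
          rw [show (d : ℤ) * (a' : ℤ) = (a : ℤ) by exact_mod_cast (Nat.mul_comm a' d ▸ hada)]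
          exact this
        exact (mul_dvd_mul_iff_left (by exact_mod_cast hd0.ne' : (d : ℤ) ≠ 0)).mp h1
      rw [ZMod.intCast_zmod_eq_zero_iff_dvd]
      exact ha'k
    -- the pointwise map
    set F : (Fin b → ZMod a') →+ (Fin b → ZMod a) := f.compLeft (Fin b) with hF
    have hFinj : Function.Injective F := fun x y hxy =>
      funext fun i => hfinj (congrFun hxy i)
    refine ⟨a', F.range, hbound, ?_, ⟨(AddMonoidHom.ofInjective hFinj).symm⟩⟩
    -- range F ≤ Γ'
    rintro y ⟨x, rfl⟩
    -- Bezout: d = a * u + n * v, so in ZMod a, d = n * v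
    obtain ⟨u, v, huv⟩ : ∃ u v : ℤ, (d : ℤ) = a * u + n * v :=
      ⟨Nat.gcdA a n, Nat.gcdB a n, Nat.gcd_eq_gcd_ab a n⟩
    have hdv : (d : ZMod a) = (n : ZMod a) * (v : ZMod a) := by
      have := congrArg (fun z : ℤ => (z : ZMod a)) huv
      push_cast at this
      simpa [ZMod.natCast_self] using this
    choose k hk using fun i => ZMod.intCast_surjective (x i)
    have : F x = n • (fun i => (v : ZMod a) * (k i : ZMod a)) := by
      funext i
      have : F x i = f (x i) := rfl
      rw [this, ← hk i, hfval, hdv]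
      simp only [Pi.smul_apply, nsmul_eq_mul]
      ring
    rw [this]
    exact Γ'.nsmul_index_mem _
end

section
/- For all natural numbers b and C₁ there exists a natural number C₂ with the following property: whenever Γ is a finite group and N is a normal subgroup of Γ with |N| ≤ C₁ such that Γ/N is isomorphic to (ℤ/a)^b for some natural number a, then Γ contains a subgroup isomorphic to (ℤ/a')^b for some natural number a' satisfying C₂·a' ≥ a. -/
/-!
Let `f : Γ → (ℤ/a)^b` be the quotient map, with kernel `N`. The centralizer `K` of `N` is the
kernel of the conjugation action on `N`, so its index is at most `|N|!`. For `x, y ∈ K` the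
commutator `⁅y, x⁆` lies in `N` and commutes with `x`, so `x^j` and `y^j` commute as soon as
`|N| ∣ j`. With `j = (C₁!)!` the `j`-th powers of `K` therefore generate an abelian subgroup `A`
whose image contains `j² • (ℤ/a)^b ≅ (ℤ/a')^b`, where `a ≤ j² a'`. Finally, a finite abelian
group surjecting onto `D` contains a copy of `D` (dualize), and `A ∩ f⁻¹(j² • (ℤ/a)^b)`
surjects onto `(ℤ/a')^b`.
-/

open scoped commutatorElement IsMulCommutative Nat

theorem Commute.pow_pow_of_commutatorElement {G : Type*} [Group G] {x y : G} {j : ℕ}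
    (hcx : Commute ⁅y, x⁆ x) (hj : ⁅y, x⁆ ^ j = 1) : Commute (x ^ j) (y ^ j) := by
  have hconj : SemiconjBy y x (⁅y, x⁆ * x) := by
    simp only [SemiconjBy, commutatorElement_def]; group
  have := hconj.pow_right j
  rw [hcx.mul_pow, hj, one_mul] at this
  exact (Commute.symm this).pow_right j

theorem MulAut.ker_conjNormal {G : Type*} [Group G] (N : Subgroup G) [N.Normal] :
    (MulAut.conjNormal : G →* MulAut N).ker = Subgroup.centralizer N := by
  ext g
  simp only [MonoidHom.mem_ker, MulEquiv.ext_iff, MulAut.one_apply, Subtype.ext_iff,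
    MulAut.conjNormal_apply, Subgroup.mem_centralizer_iff, mul_inv_eq_iff_eq_mul, Subtype.forall,
    SetLike.mem_coe]
  exact forall₂_congr fun h _ => eq_comm

theorem Subgroup.index_centralizer_le_factorial {G : Type*} [Group G] (N : Subgroup G) [N.Normal]
    [Finite N] : (centralizer (N : Set G)).index ≤ (Nat.card N)! := by
  rw [← MulAut.ker_conjNormal, index_ker, ← Nat.card_perm]
  calc Nat.card (MulAut.conjNormal : G →* MulAut N).range ≤ Nat.card (MulAut N) :=
        card_le_card_group _
    _ ≤ Nat.card (Equiv.Perm N) :=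
        Nat.card_le_card_of_injective (MulAut.toPerm N) MulEquiv.toEquiv_injective

theorem CommGroup.exists_injective_of_surjective {A D : Type*} [CommGroup A] [Finite A]
    [CommGroup D] {f : A →* D} (hf : Function.Surjective f) :
    ∃ g : D →* A, Function.Injective g := by
  have : Finite D := Finite.of_surjective f hf
  have : NeZero (Monoid.exponent A : ℂ) := ⟨Nat.cast_ne_zero.mpr Monoid.exponent_ne_zero_of_finite⟩
  have : HasEnoughRootsOfUnity ℂ (Monoid.exponent D) :=
    HasEnoughRootsOfUnity.of_dvd ℂ (MonoidHom.exponent_dvd hf)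
  obtain ⟨eA⟩ := monoidHom_mulEquiv_of_hasEnoughRootsOfUnity A ℂ
  obtain ⟨eD⟩ := monoidHom_mulEquiv_of_hasEnoughRootsOfUnity D ℂ
  have hdual : Function.Injective (MonoidHom.compHom' f : (D →* ℂˣ) →* (A →* ℂˣ)) :=
    fun χ ψ h => MonoidHom.ext fun d => by
      obtain ⟨x, rfl⟩ := hf d
      exact DFunLike.congr_fun h x
  exact ⟨eA.toMonoidHom.comp ((MonoidHom.compHom' f).comp eD.symm.toMonoidHom),
    eA.injective.comp (hdual.comp eD.symm.injective)⟩

theorem exists_injective_of_range_le_map {Γ M D : Type*} [Group Γ] [Group M] [CommGroup D]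
    {A : Subgroup Γ} [IsMulCommutative A] [Finite A] (f : Γ →* M) {ι : D →* M}
    (hι : Function.Injective ι) (hle : ι.range ≤ A.map f) :
    ∃ g : D →* Γ, Function.Injective g := by
  set B := ι.range.comap (f.comp A.subtype)
  let θ : B →* D := (MonoidHom.ofInjective hι).symm.toMonoidHom.comp
    (((f.comp A.subtype).comp B.subtype).codRestrict ι.range fun x => x.2)
  have hθ : Function.Surjective θ := by
    intro d
    obtain ⟨x, hxA, hx⟩ := hle ⟨d, rfl⟩
    refine ⟨⟨⟨x, hxA⟩, ⟨d, hx.symm⟩⟩, ?_⟩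
    change (MonoidHom.ofInjective hι).symm _ = d
    rw [MulEquiv.symm_apply_eq]
    exact Subtype.ext hx
  obtain ⟨g, hg⟩ := CommGroup.exists_injective_of_surjective hθ
  exact ⟨A.subtype.comp (B.subtype.comp g),
    A.subtype_injective.comp (B.subtype_injective.comp hg)⟩

theorem ZMod.le_mul_addOrderOf_natCast (a : ℕ) {n : ℕ} (hn : 0 < n) :
    a ≤ n * addOrderOf (n : ZMod a) := by
  rcases eq_or_ne a 0 with rfl | ha
  · exact Nat.zero_le _
  rw [ZMod.addOrderOf_coe n ha]
  calc a = a.gcd n * (a / a.gcd n) := (Nat.mul_div_cancel' (Nat.gcd_dvd_left a n)).symm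
    _ ≤ n * (a / a.gcd n) := Nat.mul_le_mul_right _ (Nat.le_of_dvd hn (Nat.gcd_dvd_right a n))

theorem ZMod.exists_injective_addMonoidHom_nsmul (a n : ℕ) :
    ∃ u : ZMod (addOrderOf (n : ZMod a)) →+ ZMod a, Function.Injective u ∧
      ∀ y, ∃ x, u y = n • x := by
  refine ⟨ZMod.lift _ ⟨zmultiplesHom _ (n : ZMod a), by
    rw [zmultiplesHom_apply, natCast_zsmul]; exact addOrderOf_nsmul_eq_zero _⟩, ?_, ?_⟩
  · rw [ZMod.lift_injective]
    intro m hm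
    rw [ZMod.intCast_zmod_eq_zero_iff_dvd]
    exact_mod_cast addOrderOf_dvd_iff_zsmul_eq_zero.mpr hm
  · intro y
    obtain ⟨z, rfl⟩ := ZMod.intCast_surjective y
    refine ⟨z, ?_⟩
    simp [ZMod.lift_coe, mul_comm]

theorem ZMod.exists_injective_pi_nsmul (ι : Type*) (a n : ℕ) :
    ∃ U : (ι → ZMod (addOrderOf (n : ZMod a))) →+ (ι → ZMod a), Function.Injective U ∧
      ∀ y, ∃ x, U y = n • x := by
  obtain ⟨u, hu, hun⟩ := ZMod.exists_injective_addMonoidHom_nsmul a n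
  refine ⟨u.compLeft ι, hu.comp_left, fun y => ?_⟩
  choose x hx using fun i => hun (y i)
  exact ⟨x, funext hx⟩

section

variable {Γ M : Type*} [Group Γ] [CommGroup M]

theorem isMulCommutative_closure_pow_centralizer_ker (f : Γ →* M) {j : ℕ}
    (hj : ∀ c ∈ f.ker, c ^ j = 1) :
    IsMulCommutative
      (Subgroup.closure ((· ^ j) '' (Subgroup.centralizer (f.ker : Set Γ) : Set Γ))) := by
  refine Subgroup.isMulCommutative_closure ?_
  rintro _ ⟨x, hx, rfl⟩ _ ⟨y, -, rfl⟩
  have hc : ⁅y, x⁆ ∈ f.ker := by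
    rw [MonoidHom.mem_ker, map_commutatorElement, commutatorElement_eq_one_iff_mul_comm]
    exact mul_comm _ _
  exact Commute.pow_pow_of_commutatorElement (Subgroup.mem_centralizer_iff.mp hx _ hc) (hj _ hc)

theorem exists_isMulCommutative_pow_mem_map [Finite Γ] {f : Γ →* M}
    (hf : Function.Surjective f) {C : ℕ} (hC : Nat.card f.ker ≤ C) :
    ∃ A : Subgroup Γ, IsMulCommutative A ∧ ∀ q : M, q ^ (C !)! ^ 2 ∈ A.map f := by
  set j := (C !)!
  have hdvd {n : ℕ} (hn0 : 0 < n) (hn : n ≤ C !) : n ∣ j := Nat.dvd_factorial hn0 hn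
  have hker : ∀ c ∈ f.ker, c ^ j = 1 := fun c hc => orderOf_dvd_iff_pow_eq_one.mp <|
    (f.ker.orderOf_dvd_natCard hc).trans (hdvd Nat.card_pos (hC.trans C.self_le_factorial))
  set K := Subgroup.centralizer (f.ker : Set Γ)
  have hK (x : Γ) : x ^ j ∈ K := by
    obtain ⟨d, hd⟩ := hdvd (Nat.pos_of_ne_zero Subgroup.index_ne_zero_of_finite)
      ((f.ker.index_centralizer_le_factorial).trans (Nat.factorial_le hC))
    rw [hd, pow_mul]
    exact K.pow_mem (K.pow_index_mem x) d
  refine ⟨_, isMulCommutative_closure_pow_centralizer_ker f hker, fun q => ?_⟩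
  obtain ⟨x, rfl⟩ := hf q
  exact ⟨(x ^ j) ^ j, Subgroup.subset_closure ⟨x ^ j, hK x, rfl⟩, by
    rw [map_pow, map_pow, ← pow_mul, sq]⟩

end

/-- For all natural numbers `b` and `C₁` there exists `C₂` such that: whenever `Γ` is a
finite group, `N` is a normal subgroup of `Γ` with `|N| ≤ C₁`, and `Γ/N ≅ (ℤ/a)^b` for some
natural number `a`, then `Γ` contains a subgroup isomorphic to `(ℤ/a')^b` for some `a'`
with `C₂ * a' ≥ a`. -/
theorem stmt5 (b C₁ : ℕ) :
    ∃ C₂ : ℕ, ∀ (Γ : Type) [Group Γ] [Finite Γ] (N : Subgroup Γ) [N.Normal] (a : ℕ),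
      Nat.card N ≤ C₁ →
      Nonempty ((Γ ⧸ N) ≃* Multiplicative (Fin b → ZMod a)) →
      ∃ a' : ℕ, a ≤ C₂ * a' ∧
        ∃ H : Subgroup Γ, Nonempty (H ≃* Multiplicative (Fin b → ZMod a')) := by
  refine ⟨(C₁ !)! ^ 2, fun Γ _ _ N _ a hN ⟨e⟩ => ?_⟩
  set f := e.toMonoidHom.comp (QuotientGroup.mk' N)
  have hker : f.ker = N := by
    ext x
    simp [f]
  obtain ⟨A, hA, hpow⟩ :=
    exists_isMulCommutative_pow_mem_map (e.surjective.comp (QuotientGroup.mk'_surjective N))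
      (hker ▸ hN)
  obtain ⟨U, hU, hUpow⟩ := ZMod.exists_injective_pi_nsmul (Fin b) a ((C₁ !)! ^ 2)
  have hrange : (AddMonoidHom.toMultiplicative U).range ≤ A.map f := by
    rintro _ ⟨y, rfl⟩
    obtain ⟨x, hx⟩ := hUpow y.toAdd
    change Multiplicative.ofAdd (U y.toAdd) ∈ _
    rw [hx, ofAdd_nsmul]
    exact hpow _
  obtain ⟨g, hg⟩ := exists_injective_of_range_le_map f hU hrange
  exact ⟨_, ZMod.le_mul_addOrderOf_natCast a (by positivity), g.range,
    ⟨(MonoidHom.ofInjective hg).symm⟩⟩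
end

section
/- For every natural number n there exists a constant C_n such that every finite subgroup of GL(n, ℤ) has at most C_n elements. -/
/-!
Reduction modulo `3` maps `GL(n, ℤ)` to the finite group `GL(n, 𝔽₃)`, and it is injective on
every finite subgroup: an integer matrix `g ≡ 1 (mod p)` of finite order, `p` an odd prime,
is `1`.
Otherwise some power `h = 1 + D` of `g` has prime order `q`, and expanding `(1 + D)^q = 1`
binomially shows that `p^k ∣ D` implies `p^(k+1) ∣ D`, so `D = 0`.
-/

open Matrix

variable {R : Type*} [Ring R]

theorem exists_one_add_pow_eq (y : R) (q : ℕ) :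
    ∃ T : R, (1 + y) ^ q = 1 + (q : ℤ) • y + (q.choose 2 : ℤ) • y ^ 2 + y ^ 3 * T := by
  induction q with
  | zero => exact ⟨0, by simp⟩
  | succ q ih =>
    obtain ⟨T, hT⟩ := ih
    refine ⟨(q.choose 2 : ℤ) • 1 + T + y * T, ?_⟩
    rw [pow_succ', hT, Nat.choose_succ_succ', Nat.choose_one_right]
    simp only [add_mul, mul_add, one_mul, mul_one, mul_smul_comm, ← mul_assoc, ← pow_succ',
      ← pow_succ, ← sq]
    push_cast
    module

/-- Dividing `(1 + p^k E)^q = 1` by `p^k` gives `q E ≡ 0 (mod p^k)`, and even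
`p E ≡ 0 (mod p^(k+1))` when `q = p`, because then `p ∣ q.choose 2`. -/
theorem exists_eq_smul_of_one_add_pow_smul_eq_one [IsAddTorsionFree R] {p q k : ℕ}
    (hp : p.Prime) (hp2 : p ≠ 2) (hq : q.Prime) (hk : k ≠ 0) {E : R}
    (h : (1 + (p : ℤ) ^ k • E) ^ q = 1) : ∃ F, E = (p : ℤ) • F := by
  obtain ⟨T, hT⟩ := exists_one_add_pow_eq ((p : ℤ) ^ k • E) q
  obtain ⟨j, rfl⟩ := Nat.exists_eq_add_one.2 (Nat.pos_of_ne_zero hk)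
  have hp0 : (p : ℤ) ≠ 0 := by exact_mod_cast hp.ne_zero
  set W := -(((q.choose 2 : ℤ) * p ^ j) • E ^ 2 + (p : ℤ) ^ (2 * j + 1) • (E ^ 3 * T))
  have hqE : (q : ℤ) • E = (p : ℤ) • W := by
    apply zsmul_right_injective (pow_ne_zero (j + 1) hp0)
    simp only [smul_pow, smul_mul_assoc, h] at hT
    linear_combination (norm := module) (-1 : ℤ) • hT
  rcases eq_or_ne q p with rfl | hqp
  · obtain ⟨c, hc⟩ := hq.dvd_choose_self two_ne_zero (lt_of_le_of_ne hq.two_le (Ne.symm hp2))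
    refine ⟨-((c * q ^ j : ℤ) • E ^ 2 + (q : ℤ) ^ (2 * j) • (E ^ 3 * T)), ?_⟩
    apply zsmul_right_injective (Int.natCast_ne_zero.2 hq.ne_zero)
    dsimp only
    rw [hqE]
    simp only [W, hc]
    push_cast
    module
  · obtain ⟨a, b, hab⟩ := Nat.isCoprime_iff_coprime.2 ((Nat.coprime_primes hq hp).2 hqp)
    refine ⟨a • W + b • E, ?_⟩
    calc E = (a * q + b * p) • E := by rw [hab, one_smul]
      _ = (p : ℤ) • (a • W + b • E) := by rw [add_smul, mul_smul, hqE]; module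

theorem forall_exists_eq_pow_smul_of_one_add_pow_eq_one [IsAddTorsionFree R] {p q : ℕ}
    (hp : p.Prime) (hp2 : p ≠ 2) (hq : q.Prime) {D : R} (hD : ∃ z, D = (p : ℤ) • z)
    (h : (1 + D) ^ q = 1) (t : ℕ) : ∃ z, D = (p : ℤ) ^ t • z := by
  induction t with
  | zero => exact ⟨D, (one_smul ℤ D).symm⟩
  | succ t ih =>
    obtain ⟨z, rfl⟩ := ih
    obtain rfl | ht := eq_or_ne t 0
    · simpa using hD
    obtain ⟨F, rfl⟩ := exists_eq_smul_of_one_add_pow_smul_eq_one hp hp2 hq ht h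
    exact ⟨F, by rw [pow_succ, mul_smul]⟩

theorem exists_pow_sub_one_eq_smul {c : ℤ} {g : R} (hg : ∃ z, g - 1 = c • z) (m : ℕ) :
    ∃ z, g ^ m - 1 = c • z := by
  obtain ⟨z, hz⟩ := hg
  exact ⟨(∑ i ∈ Finset.range m, g ^ i) * z, by rw [← geom_sum_mul, hz, mul_smul_comm]⟩

theorem eq_one_of_pow_prime_eq_one [IsAddTorsionFree R] {p q : ℕ}
    (hsep : ∀ x : R, (∀ t : ℕ, ∃ z, x = (p : ℤ) ^ t • z) → x = 0)
    (hp : p.Prime) (hp2 : p ≠ 2) (hq : q.Prime) {g : R}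
    (hg : ∃ z, g - 1 = (p : ℤ) • z) (h : g ^ q = 1) : g = 1 :=
  sub_eq_zero.1 <| hsep _ <|
    forall_exists_eq_pow_smul_of_one_add_pow_eq_one hp hp2 hq hg (by rwa [add_sub_cancel])

theorem eq_one_of_isOfFinOrder [IsAddTorsionFree R] {p : ℕ}
    (hsep : ∀ x : R, (∀ t : ℕ, ∃ z, x = (p : ℤ) ^ t • z) → x = 0)
    (hp : p.Prime) (hp2 : p ≠ 2) {g : R} (hg : ∃ z, g - 1 = (p : ℤ) • z)
    (hfin : IsOfFinOrder g) : g = 1 := by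
  by_contra hne
  have hq : (orderOf g).minFac.Prime := Nat.minFac_prime (mt orderOf_eq_one_iff.1 hne)
  have hord : orderOf (g ^ (orderOf g / (orderOf g).minFac)) = (orderOf g).minFac :=
    orderOf_pow_orderOf_div hfin.orderOf_pos.ne' (Nat.minFac_dvd _)
  have hone := eq_one_of_pow_prime_eq_one hsep hp hp2 hq (exists_pow_sub_one_eq_smul hg _)
    (hord ▸ pow_orderOf_eq_one _)
  rw [hone, orderOf_one] at hord
  exact hq.one_lt.ne hord

instance {m n α : Type*} [AddMonoid α] [IsAddTorsionFree α] : IsAddTorsionFree (Matrix m n α) :=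
  inferInstanceAs (IsAddTorsionFree (m → n → α))

theorem Matrix.eq_zero_of_forall_exists_eq_pow_smul {m n : Type*} {p : ℕ} (hp : p ≠ 1)
    {x : Matrix m n ℤ} (hx : ∀ t : ℕ, ∃ z, x = (p : ℤ) ^ t • z) : x = 0 := by
  ext i j
  by_contra hij
  obtain ⟨t, ht⟩ := (Int.finiteMultiplicity_iff (a := (p : ℤ))).2 ⟨by simpa using hp, hij⟩
  obtain ⟨z, hz⟩ := hx (t + 1)
  exact ht ⟨z i j, by rw [hz]; rfl⟩

theorem Matrix.exists_eq_smul_of_mapMatrix_eq_zero {m : Type*} [Fintype m] [DecidableEq m]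
    {p : ℕ} {x : Matrix m m ℤ} (hx : (Int.castRingHom (ZMod p)).mapMatrix x = 0) :
    ∃ z, x = (p : ℤ) • z := by
  refine ⟨x.map (· / (p : ℤ)), ?_⟩
  ext i j
  have hdvd : (p : ℤ) ∣ x i j := (ZMod.intCast_zmod_eq_zero_iff_dvd _ p).1 (congrFun₂ hx i j)
  simp [Int.mul_ediv_cancel' hdvd]

theorem Matrix.GeneralLinearGroup.eq_one_of_map_eq_one_of_isOfFinOrder {ι : Type*} [Fintype ι]
    [DecidableEq ι] {p : ℕ} (hp : p.Prime) (hp2 : p ≠ 2) {g : GL ι ℤ}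
    (hg : map (Int.castRingHom (ZMod p)) g = 1) (hfin : IsOfFinOrder g) : g = 1 := by
  have hg' : (Int.castRingHom (ZMod p)).mapMatrix ((g : Matrix ι ι ℤ) - 1) = 0 := by
    rw [map_sub, map_one, sub_eq_zero]
    exact congrArg Units.val hg
  exact Units.ext <|
    eq_one_of_isOfFinOrder (fun _ ↦ eq_zero_of_forall_exists_eq_pow_smul hp.ne_one) hp hp2
      (exists_eq_smul_of_mapMatrix_eq_zero hg') (Units.isOfFinOrder_val.2 hfin)

/-- (Minkowski) For every `n` there is a constant `C` such that every finite subgroup of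
`GL(n, ℤ)` has at most `C` elements. -/
theorem stmt9 (n : ℕ) :
    ∃ C : ℕ, ∀ H : Subgroup (Matrix.GeneralLinearGroup (Fin n) ℤ),
      Finite H → Nat.card H ≤ C := by
  refine ⟨Nat.card (GL (Fin n) (ZMod 3)), fun H _ ↦ ?_⟩
  let reduce := (GeneralLinearGroup.map (Int.castRingHom (ZMod 3))).comp H.subtype
  refine Nat.card_le_card_of_injective reduce ((injective_iff_map_eq_one reduce).2 fun g hg ↦ ?_)
  exact Subtype.ext <| GeneralLinearGroup.eq_one_of_map_eq_one_of_isOfFinOrder Nat.prime_three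
    (by norm_num) hg (H.subtype.isOfFinOrder (isOfFinOrder_of_finite g))
end

section
/- Let G be a compact Lie group with Lie algebra 𝔤. There exists a neighborhood U of 0 in 𝔤 such that for all α, β ∈ U, if exp(α) and exp(β) commute in G, then [α, β] = 0. -/
open NormedSpace Filter Topology Set

/-! With `g = exp x` we have `exp (g y g⁻¹) = g (exp y) g⁻¹`, which equals `exp y` when `exp x`
and `exp y` commute. For `x, y` near `0` both `g y g⁻¹` and `y` lie in a neighbourhood of `0` on
which `exp` is injective (inverse function theorem), so `g y g⁻¹ = y`: `exp x` commutes with `y`.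
Hence `exp (s y)` commutes with `exp x` for every `s`, and the same argument with the roles
exchanged shows that `x` commutes with `exp (s y)` for small `s`; differentiating at `s = 0` gives
`x y = y x`. -/

variable {𝔸 : Type*} [NormedRing 𝔸] [CompleteSpace 𝔸]

section RatAlgebra

variable [NormedAlgebra ℚ 𝔸]

lemma exp_exp_mul_mul_exp_neg (x y : 𝔸) :
    exp (exp x * y * exp (-x)) = exp x * exp y * exp (-x) := by
  obtain ⟨u, hu⟩ := isUnit_exp x
  have hu_inv : (↑u⁻¹ : 𝔸) = exp (-x) := by rw [← Ring.inverse_unit, hu, Ring.inverse_exp]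
  simpa only [hu, hu_inv] using exp_units_conj u y

lemma exp_mul_exp_neg (x : 𝔸) : exp x * exp (-x) = 1 := by
  rw [← exp_add_of_commute (Commute.refl x).neg_right, add_neg_cancel, exp_zero]

lemma exp_neg_mul_exp (x : 𝔸) : exp (-x) * exp x = 1 := by
  rw [← exp_add_of_commute (Commute.refl x).neg_left, neg_add_cancel, exp_zero]

lemma commute_exp_of_commute_exp_of_injOn {V : Set 𝔸} (hV : InjOn exp V) {x y : 𝔸}
    (hy : y ∈ V) (hxy : exp x * y * exp (-x) ∈ V) (h : Commute (exp x) (exp y)) :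
    Commute (exp x) y := by
  have hconj : exp x * y * exp (-x) = y := hV hxy hy <| by
    rw [exp_exp_mul_mul_exp_neg, h.eq, mul_assoc, exp_mul_exp_neg, mul_one]
  calc exp x * y = exp x * y * exp (-x) * exp x := by
        rw [mul_assoc _ (exp (-x)), exp_neg_mul_exp, mul_one]
    _ = y * exp x := by rw [hconj]

end RatAlgebra

lemma exists_mem_nhds_zero_injOn_exp (𝕂 : Type*) [RCLike 𝕂] [NormedAlgebra 𝕂 𝔸] :
    ∃ V ∈ 𝓝 (0 : 𝔸), InjOn exp V := by
  have hexp : HasStrictFDerivAt (exp : 𝔸 → 𝔸)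
      ((ContinuousLinearEquiv.refl 𝕂 𝔸 : 𝔸 ≃L[𝕂] 𝔸) : 𝔸 →L[𝕂] 𝔸) 0 :=
    hasStrictFDerivAt_exp_zero (𝕂 := 𝕂)
  let e := hexp.toOpenPartialHomeomorph exp
  refine ⟨e.source, e.open_source.mem_nhds hexp.mem_toOpenPartialHomeomorph_source, ?_⟩
  simpa only [e, hexp.toOpenPartialHomeomorph_coe] using e.injOn

lemma commute_of_eventually_commute_exp_smul {𝕂 : Type*} [RCLike 𝕂] [NormedAlgebra 𝕂 𝔸]
    {x y : 𝔸} (h : ∀ᶠ s in 𝓝 (0 : 𝕂), Commute x (exp (s • y))) : Commute x y := by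
  have hleft : HasDerivAt (fun s : 𝕂 => x * exp (s • y)) (x * y) 0 := by
    simpa using (hasDerivAt_exp_smul_const y (0 : 𝕂)).const_mul x
  have hright : HasDerivAt (fun s : 𝕂 => exp (s • y) * x) (y * x) 0 := by
    simpa using (hasDerivAt_exp_smul_const y (0 : 𝕂)).mul_const x
  exact hleft.unique (hright.congr_of_eventuallyEq (h.mono fun s hs => hs.eq))

lemma exists_mem_nhds_zero_forall_commute_exp_of_commute_exp
    (𝕂 : Type*) [RCLike 𝕂] [NormedAlgebra 𝕂 𝔸] :
    ∃ U ∈ 𝓝 (0 : 𝔸), ∀ x ∈ U, ∀ y ∈ U, Commute (exp x) (exp y) → Commute (exp x) y := by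
  -- `exp` is defined independently of the `ℚ`-algebra structure, so any one will do.
  let := NormedAlgebra.restrictScalars ℚ 𝕂 𝔸
  obtain ⟨V, hV, hinj⟩ := exists_mem_nhds_zero_injOn_exp 𝕂 (𝔸 := 𝔸)
  have hconj : Tendsto (fun p : 𝔸 × 𝔸 => exp p.1 * p.2 * exp (-p.1)) (𝓝 0 ×ˢ 𝓝 0) (𝓝 0) := by
    have hcont : Continuous fun p : 𝔸 × 𝔸 => exp p.1 * p.2 * exp (-p.1) := by fun_prop
    simpa [← nhds_prod_eq] using hcont.tendsto (0, 0)
  obtain ⟨U₁, hU₁, U₂, hU₂, hsub⟩ := mem_prod_iff.mp (hconj hV)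
  refine ⟨U₁ ∩ U₂ ∩ V, inter_mem (inter_mem hU₁ hU₂) hV, fun x hx y hy h => ?_⟩
  exact commute_exp_of_commute_exp_of_injOn hinj hy.2 (hsub (mk_mem_prod hx.1.1 hy.1.2)) h

theorem exists_mem_nhds_zero_forall_commute_of_commute_exp
    (𝕂 : Type*) [RCLike 𝕂] [NormedAlgebra 𝕂 𝔸] :
    ∃ U ∈ 𝓝 (0 : 𝔸), ∀ x ∈ U, ∀ y ∈ U, Commute (exp x) (exp y) → Commute x y := by
  let := NormedAlgebra.restrictScalars ℚ 𝕂 𝔸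
  obtain ⟨U, hU, hcomm⟩ :=
    exists_mem_nhds_zero_forall_commute_exp_of_commute_exp 𝕂 (𝔸 := 𝔸)
  refine ⟨U, hU, fun x hx y hy h => commute_of_eventually_commute_exp_smul (𝕂 := 𝕂) ?_⟩
  have hxy : Commute (exp x) y := hcomm x hx y hy h
  have hsy : ∀ᶠ s in 𝓝 (0 : 𝕂), s • y ∈ U := by
    have hsmul : Tendsto (fun s : 𝕂 => s • y) (𝓝 0) (𝓝 0) := by
      simpa using (tendsto_id (x := 𝓝 (0 : 𝕂))).smul_const y
    exact hsmul hU
  filter_upwards [hsy] with s hs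
  exact (hcomm _ hs x hx (hxy.smul_right s).exp_right.symm).symm

theorem stmt12_general (n : ℕ) (G : Subgroup (Matrix.GeneralLinearGroup (Fin n) ℝ)) :
    ∃ U ∈ nhds (0 : Matrix (Fin n) (Fin n) ℝ), ∀ α ∈ U, ∀ β ∈ U,
      (∀ t : ℝ, ∃ g ∈ G, ((g : Matrix.GeneralLinearGroup (Fin n) ℝ) :
          Matrix (Fin n) (Fin n) ℝ) = exp (t • α)) →
      (∀ t : ℝ, ∃ g ∈ G, ((g : Matrix.GeneralLinearGroup (Fin n) ℝ) :
          Matrix (Fin n) (Fin n) ℝ) = exp (t • β)) →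
      exp α * exp β = exp β * exp α →
      α * β - β * α = 0 := by
  -- This norm induces the entrywise topology in which `nhds` is taken in the statement.
  let : NormedRing (Matrix (Fin n) (Fin n) ℝ) := Matrix.linftyOpNormedRing
  let : NormedAlgebra ℝ (Matrix (Fin n) (Fin n) ℝ) := Matrix.linftyOpNormedAlgebra
  obtain ⟨U, hU, hcomm⟩ := exists_mem_nhds_zero_forall_commute_of_commute_exp ℝ
    (𝔸 := Matrix (Fin n) (Fin n) ℝ)
  exact ⟨U, hU, fun α hα β hβ _ _ h => sub_eq_zero.mpr (hcomm α hα β hβ h).eq⟩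

/-- Let `G` be a compact (matrix) Lie group with Lie algebra `𝔤`.  There is a neighborhood
`U` of `0` in the ambient matrix space such that for all `α, β ∈ U` belonging to the Lie
algebra of `G` (i.e. whose one-parameter exponential subgroups lie in `G`), if `exp α` and
`exp β` commute then `[α, β] = α * β - β * α = 0`. -/
theorem stmt12 (n : ℕ) (G : Subgroup (Matrix.GeneralLinearGroup (Fin n) ℝ))
    (hG : IsCompact ((G : Set (Matrix.GeneralLinearGroup (Fin n) ℝ)))) :
    ∃ U ∈ nhds (0 : Matrix (Fin n) (Fin n) ℝ), ∀ α ∈ U, ∀ β ∈ U,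
      (∀ t : ℝ, ∃ g ∈ G, ((g : Matrix.GeneralLinearGroup (Fin n) ℝ) :
          Matrix (Fin n) (Fin n) ℝ) = exp (t • α)) →
      (∀ t : ℝ, ∃ g ∈ G, ((g : Matrix.GeneralLinearGroup (Fin n) ℝ) :
          Matrix (Fin n) (Fin n) ℝ) = exp (t • β)) →
      exp α * exp β = exp β * exp α →
      α * β - β * α = 0 :=
  stmt12_general n G
end
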